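/- arXiv:2303.16188 — 8 statements merged into one kernel-verified Lean document; each statement's English description precedes it below -/
import Mathlib

section
/- Let A and G be d×d symmetric positive-definite real matrices with A ⪯ G ⪯ ηA for some η ≥ 1, and let U be any d×k real matrix. Define G₊ = G − (G−A)U(Uᵀ(G−A)U)†Uᵀ(G−A), where † denotes the Moore–Penrose pseudoinverse. Then A ⪯ G₊ ⪯ ηA. -/
open Matrix

/-- The four Penrose conditions characterizing the Moore–Penrose pseudoinverse. -/
def IsMoorePenrose {m n : Type*} [Fintype m] [Fintype n]
    (S : Matrix m n ℝ) (P : Matrix n m ℝ) : Prop :=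
  S * P * S = S ∧ P * S * P = P ∧ (S * P)ᵀ = S * P ∧ (P * S)ᵀ = P * S

/-!
Put `E = G - A ⪰ 0` and `C = E U (UᵀEU)† Uᵀ E`, so that `G₊ = G - C`. With `B = √E` and `W = B U`,
`C = B Q B` where `Q = W (WᵀW)† Wᵀ` is the orthogonal projection onto the range of `W`; since
`0 ⪯ Q ⪯ 1`, conjugating by `B` gives `0 ⪯ C ⪯ B² = E`. Hence `A = G - E ⪯ G - C ⪯ G ⪯ η A`.
-/

open scoped MatrixOrder

namespace IsMoorePenrose

variable {m n : Type*} [Fintype m] [Fintype n]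

theorem transpose {S : Matrix m n ℝ} {P : Matrix n m ℝ} (h : IsMoorePenrose S P) :
    IsMoorePenrose Sᵀ Pᵀ := by
  obtain ⟨h₁, h₂, h₃, h₄⟩ := h
  refine ⟨?_, ?_, ?_, ?_⟩
  · simpa only [transpose_mul, Matrix.mul_assoc] using congrArg Matrix.transpose h₁
  · simpa only [transpose_mul, Matrix.mul_assoc] using congrArg Matrix.transpose h₂
  · simpa only [transpose_mul, transpose_transpose] using h₄.symm
  · simpa only [transpose_mul, transpose_transpose] using h₃.symm

theorem unique {S : Matrix m n ℝ} {P P' : Matrix n m ℝ} (h : IsMoorePenrose S P)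
    (h' : IsMoorePenrose S P') : P = P' := by
  obtain ⟨h₁, h₂, h₃, h₄⟩ := h
  obtain ⟨h₁', h₂', h₃', h₄'⟩ := h'
  have hP : P = P * S * P' :=
    calc P = P * (S * P) := by rw [← Matrix.mul_assoc, h₂]
      _ = P * ((S * P') * (S * P))ᵀ := by rw [← Matrix.mul_assoc (S * P'), h₁', h₃]
      _ = P * ((S * P) * (S * P')) := by rw [transpose_mul, h₃, h₃']
      _ = (P * S * P) * S * P' := by simp only [Matrix.mul_assoc]
      _ = P * S * P' := by rw [h₂]
  have hP' : P' = P * S * P' :=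
    calc P' = (P' * S) * P' := h₂'.symm
      _ = ((P' * S) * (P * S))ᵀ * P' := by
          rw [Matrix.mul_assoc P' S (P * S), ← Matrix.mul_assoc S P S, h₁, h₄']
      _ = ((P * S) * (P' * S)) * P' := by rw [transpose_mul, h₄, h₄']
      _ = P * S * (P' * S * P') := by simp only [Matrix.mul_assoc]
      _ = P * S * P' := by rw [h₂']
  rw [hP, ← hP']

theorem transpose_eq_self {S P : Matrix n n ℝ} (hS : Sᵀ = S) (h : IsMoorePenrose S P) :
    Pᵀ = P :=
  (h.unique (hS ▸ h.transpose)).symm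

theorem isStarProjection_mul_mul_transpose {W : Matrix m n ℝ} {P : Matrix n n ℝ}
    (h : IsMoorePenrose (Wᵀ * W) P) : IsStarProjection (W * P * Wᵀ) where
  isIdempotentElem := by
    calc W * P * Wᵀ * (W * P * Wᵀ) = W * (P * (Wᵀ * W) * P) * Wᵀ := by
          simp only [Matrix.mul_assoc]
      _ = W * P * Wᵀ := by rw [h.2.1]
  isSelfAdjoint := by
    rw [IsSelfAdjoint, star_eq_conjTranspose, conjTranspose_eq_transpose_of_trivial,
      transpose_mul, transpose_mul, transpose_transpose,
      h.transpose_eq_self (by rw [transpose_mul, transpose_transpose]), Matrix.mul_assoc]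

theorem correction_mem_Icc {k : Type*} [Fintype k]
    {E : Matrix n n ℝ} {U : Matrix n k ℝ} {P : Matrix k k ℝ}
    (hP : IsMoorePenrose (Uᵀ * E * U) P) (hE : 0 ≤ E) :
    E * U * P * Uᵀ * E ∈ Set.Icc 0 E := by
  classical
  set B := CFC.sqrt E
  have hB : star B = B := (CFC.sqrt_nonneg E).isSelfAdjoint
  have hBt : Bᵀ = B := by
    rwa [star_eq_conjTranspose, conjTranspose_eq_transpose_of_trivial] at hB
  have hBB : B * B = E := CFC.sqrt_mul_sqrt_self E hE
  have hQ : IsStarProjection (B * U * P * (B * U)ᵀ) := by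
    refine isStarProjection_mul_mul_transpose ?_
    rwa [transpose_mul, hBt, Matrix.mul_assoc, ← Matrix.mul_assoc B, hBB, ← Matrix.mul_assoc]
  have hcorr : E * U * P * Uᵀ * E = B * (B * U * P * (B * U)ᵀ) * B := by
    rw [transpose_mul, hBt, ← hBB]
    simp only [Matrix.mul_assoc]
  have hlow := star_left_conjugate_nonneg hQ.nonneg B
  have hup := star_left_conjugate_nonneg hQ.one_sub_nonneg B
  rw [hB] at hlow hup
  rw [Matrix.mul_sub, Matrix.sub_mul, Matrix.mul_one, hBB, sub_nonneg] at hup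
  exact hcorr ▸ ⟨hlow, hup⟩

end IsMoorePenrose

theorem srk_update_loewner_bounds_general {d k : ℕ}
    (A G : Matrix (Fin d) (Fin d) ℝ)
    (η : ℝ)
    (hAG : (G - A).PosSemidef) (hGη : (η • A - G).PosSemidef)
    (U : Matrix (Fin d) (Fin k) ℝ)
    (P : Matrix (Fin k) (Fin k) ℝ)
    (hP : IsMoorePenrose (Uᵀ * (G - A) * U) P) :
    ((G - (G - A) * U * P * Uᵀ * (G - A)) - A).PosSemidef ∧
      (η • A - (G - (G - A) * U * P * Uᵀ * (G - A))).PosSemidef := by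
  -- Under `MatrixOrder`, `(Y - X).PosSemidef` is by definition `X ≤ Y`.
  obtain ⟨hlow, hup⟩ := hP.correction_mem_Icc hAG.nonneg
  exact ⟨le_sub_comm.mp hup, (sub_le_self G hlow).trans hGη⟩

/-- **SR-k update preserves the Loewner bounds** (Lemma 3.2):
if `A ⪯ G ⪯ η A` then `A ⪯ G₊ ⪯ η A` where
`G₊ = G − (G−A)U(Uᵀ(G−A)U)†Uᵀ(G−A)`. -/
theorem srk_update_loewner_bounds {d k : ℕ}
    (A G : Matrix (Fin d) (Fin d) ℝ) (hA : A.PosDef) (hG : G.PosDef)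
    (η : ℝ) (hη : 1 ≤ η)
    (hAG : (G - A).PosSemidef) (hGη : (η • A - G).PosSemidef)
    (U : Matrix (Fin d) (Fin k) ℝ)
    (P : Matrix (Fin k) (Fin k) ℝ)
    (hP : IsMoorePenrose (Uᵀ * (G - A) * U) P) :
    ((G - (G - A) * U * P * Uᵀ * (G - A)) - A).PosSemidef ∧
      (η • A - (G - (G - A) * U * P * Uᵀ * (G - A))).PosSemidef :=
  srk_update_loewner_bounds_general A G η hAG hGη U P hP
end

section
/- Let A, G be d×d symmetric positive-definite matrices with A ⪯ G ⪯ ηA for some η ≥ 1, and let U ∈ ℝ^{d×k} be full rank with k ≤ d. Define the block BFGS update G₊ = G − GU(UᵀGU)⁻¹UᵀG + AU(UᵀAU)⁻¹UᵀA. Then A ⪯ G₊ ⪯ ηA. -/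
open Matrix
open scoped ComplexOrder

/-!
Writing `Ψ(M) = MU(UᴴMU)⁻¹UᴴM`, the update is `G₊ = (G - Ψ(G)) + Ψ(A)`. The map `M ↦ M - Ψ(M)` is
monotone in the Loewner order, because its difference at `G ⪰ A` is a sum of a congruence of
`G - A` and a congruence of `UᴴAU`. This is the lower bound `G₊ - A ⪰ 0`; for the upper bound,
`Ψ(ηA) = ηΨ(A)` gives `ηA - G₊ = (ηA - Ψ(ηA)) - (G - Ψ(G)) + (η - 1)Ψ(A)`.
-/

theorem Matrix.mulVec_injective_of_rank_eq_card {m n K : Type*} [Fintype m] [Fintype n] [Field K]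
    {U : Matrix m n K} (h : U.rank = Fintype.card n) : Function.Injective U.mulVec := by
  rw [mulVec_injective_iff, linearIndependent_iff_card_eq_finrank_span, ← h,
    rank_eq_finrank_span_cols, Set.finrank]

section BlockBFGS

variable {m n : Type*} [Fintype m] [Fintype n] [DecidableEq n]

theorem sub_sub_sub_eq_congr_add_congr [DecidableEq m] {R : Type*} [Ring R] (A G : Matrix m m R)
    (U : Matrix m n R) (V : Matrix n m R) (P Q : Matrix n n R)
    (hP : P * (V * G * U) = 1) (hQ : Q * (V * A * U) = 1) (hQ' : V * A * U * Q = 1) :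
    (G - G * U * P * V * G) - (A - A * U * Q * V * A) =
      (1 - G * U * P * V) * (G - A) * (1 - U * P * V * G) +
        (G * U * P - A * U * Q) * (V * A * U) * (P * V * G - Q * V * A) := by
  have cancel {S T : Matrix n n R} (h : S * T = 1) (X : Matrix n m R) : S * (T * X) = X := by
    rw [← Matrix.mul_assoc, h, Matrix.one_mul]
  have hPX := cancel hP
  have hQX := cancel hQ
  have hQX' := cancel hQ'
  simp only [Matrix.mul_assoc] at hPX hQX hQX'
  simp only [Matrix.mul_sub, Matrix.sub_mul, Matrix.mul_one, Matrix.one_mul, Matrix.mul_assoc,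
    hPX, hQX, hQX']
  abel

variable {𝕜 : Type*} [RCLike 𝕜]

noncomputable def bfgsCorrection (M : Matrix m m 𝕜) (U : Matrix m n 𝕜) : Matrix m m 𝕜 :=
  M * U * (Uᴴ * M * U)⁻¹ * Uᴴ * M

noncomputable def blockBFGSUpdate (G A : Matrix m m 𝕜) (U : Matrix m n 𝕜) : Matrix m m 𝕜 :=
  G - bfgsCorrection G U + bfgsCorrection A U

theorem posSemidef_bfgsCorrection {A : Matrix m m 𝕜} (hA : A.IsHermitian) {U : Matrix m n 𝕜}
    (hSA : (Uᴴ * A * U).PosDef) : (bfgsCorrection A U).PosSemidef := by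
  have h := hSA.inv.posSemidef.conjTranspose_mul_mul_same (Uᴴ * A)
  rwa [conjTranspose_mul, conjTranspose_conjTranspose, hA.eq, ← Matrix.mul_assoc] at h

theorem bfgsCorrection_smul (M : Matrix m m 𝕜) (U : Matrix m n 𝕜) {c : ℝ} (hc : c ≠ 0)
    (hS : IsUnit (Uᴴ * M * U).det) : bfgsCorrection (c • M) U = c • bfgsCorrection M U := by
  have hinv : (Uᴴ * (c • M) * U)⁻¹ = c⁻¹ • (Uᴴ * M * U)⁻¹ := by
    rw [Matrix.mul_smul, Matrix.smul_mul]
    refine inv_eq_left_inv ?_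
    rw [Matrix.smul_mul, Matrix.mul_smul, smul_smul, inv_mul_cancel₀ hc, one_smul,
      nonsing_inv_mul _ hS]
  rw [bfgsCorrection, bfgsCorrection, hinv]
  simp only [Matrix.smul_mul, Matrix.mul_smul, smul_smul]
  congr 1
  field_simp

theorem posSemidef_sub_bfgsCorrection_sub [DecidableEq m] {A G : Matrix m m 𝕜}
    (hA : A.IsHermitian) (hAG : (G - A).PosSemidef) {U : Matrix m n 𝕜} (hSA : (Uᴴ * A * U).PosDef)
    (hSG : IsUnit (Uᴴ * G * U).det) :
    ((G - bfgsCorrection G U) - (A - bfgsCorrection A U)).PosSemidef := by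
  have hG : G.IsHermitian := by simpa using hA.add hAG.isHermitian
  set P := (Uᴴ * G * U)⁻¹
  set Q := (Uᴴ * A * U)⁻¹
  have hP : P.IsHermitian := (isHermitian_conjTranspose_mul_mul U hG).inv
  have hQ : Q.IsHermitian := hSA.isHermitian.inv
  have h₁ := hAG.conjTranspose_mul_mul_same (1 - U * P * Uᴴ * G)
  have h₂ := hSA.posSemidef.conjTranspose_mul_mul_same (P * Uᴴ * G - Q * Uᴴ * A)
  simp only [conjTranspose_sub, conjTranspose_one, conjTranspose_mul, conjTranspose_conjTranspose,
    hG.eq, hA.eq, hP.eq, hQ.eq] at h₁ h₂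
  have hSA' : IsUnit (Uᴴ * A * U).det := hSA.det_pos.ne'.isUnit
  rw [bfgsCorrection, bfgsCorrection, sub_sub_sub_eq_congr_add_congr A G U Uᴴ P Q
    (nonsing_inv_mul _ hSG) (nonsing_inv_mul _ hSA') (mul_nonsing_inv _ hSA')]
  convert h₁.add h₂ using 2 <;> simp only [Matrix.mul_assoc]

theorem posSemidef_blockBFGSUpdate_sub [DecidableEq m] {A G : Matrix m m 𝕜}
    (hA : A.IsHermitian) (hAG : (G - A).PosSemidef) {U : Matrix m n 𝕜} (hSA : (Uᴴ * A * U).PosDef)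
    (hSG : IsUnit (Uᴴ * G * U).det) : (blockBFGSUpdate G A U - A).PosSemidef := by
  convert posSemidef_sub_bfgsCorrection_sub hA hAG hSA hSG using 1
  rw [blockBFGSUpdate]
  abel

theorem posSemidef_smul_sub_blockBFGSUpdate [DecidableEq m] {A G : Matrix m m 𝕜}
    (hA : A.IsHermitian) (hG : G.IsHermitian) {η : ℝ} (hη : 1 ≤ η)
    (hGη : (η • A - G).PosSemidef) {U : Matrix m n 𝕜} (hSA : (Uᴴ * A * U).PosDef)
    (hSG : (Uᴴ * G * U).PosDef) : (η • A - blockBFGSUpdate G A U).PosSemidef := by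
  have hη₀ : 0 < η := by linarith
  have hSA' : IsUnit (Uᴴ * A * U).det := hSA.det_pos.ne'.isUnit
  have hSηA : (Uᴴ * (η • A) * U).PosDef := by
    simpa only [Matrix.mul_smul, Matrix.smul_mul] using hSA.smul hη₀
  have h := posSemidef_sub_bfgsCorrection_sub hG hGη hSG hSηA.det_pos.ne'.isUnit
  rw [bfgsCorrection_smul A U hη₀.ne' hSA'] at h
  have split : η • A - blockBFGSUpdate G A U =
      (η • A - η • bfgsCorrection A U - (G - bfgsCorrection G U)) +
        (η - 1) • bfgsCorrection A U := by
    rw [blockBFGSUpdate, sub_smul, one_smul]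
    abel
  rw [split]
  exact h.add ((posSemidef_bfgsCorrection hA hSA).smul (sub_nonneg.2 hη))

end BlockBFGS

theorem blockBFGS_loewner_bounds_general {d k : ℕ}
    (A G : Matrix (Fin d) (Fin d) ℝ) (hA : A.PosDef) (hG : G.PosDef)
    (η : ℝ) (hη : 1 ≤ η)
    (hAG : (G - A).PosSemidef) (hGη : (η • A - G).PosSemidef)
    (U : Matrix (Fin d) (Fin k) ℝ) (hU : U.rank = k) :
    ((G - G * U * (Uᵀ * G * U)⁻¹ * Uᵀ * G + A * U * (Uᵀ * A * U)⁻¹ * Uᵀ * A) - A).PosSemidef ∧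
      (η • A -
        (G - G * U * (Uᵀ * G * U)⁻¹ * Uᵀ * G + A * U * (Uᵀ * A * U)⁻¹ * Uᵀ * A)).PosSemidef := by
  have hUinj : Function.Injective U.mulVec :=
    mulVec_injective_of_rank_eq_card (by rwa [Fintype.card_fin])
  have hSA := hA.conjTranspose_mul_mul_same hUinj
  have hSG := hG.conjTranspose_mul_mul_same hUinj
  rw [← conjTranspose_eq_transpose_of_trivial U]
  exact ⟨posSemidef_blockBFGSUpdate_sub hA.isHermitian hAG hSA hSG.det_pos.ne'.isUnit,
    posSemidef_smul_sub_blockBFGSUpdate hA.isHermitian hG.isHermitian hη hGη hSA hSG⟩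

/-- **Lemma 5.2 (block BFGS part)**: if `A ⪯ G ⪯ ηA` then the block BFGS update
`G₊ = G − GU(UᵀGU)⁻¹UᵀG + AU(UᵀAU)⁻¹UᵀA` satisfies `A ⪯ G₊ ⪯ ηA`. -/
theorem blockBFGS_loewner_bounds {d k : ℕ} (hk : k ≤ d)
    (A G : Matrix (Fin d) (Fin d) ℝ) (hA : A.PosDef) (hG : G.PosDef)
    (η : ℝ) (hη : 1 ≤ η)
    (hAG : (G - A).PosSemidef) (hGη : (η • A - G).PosSemidef)
    (U : Matrix (Fin d) (Fin k) ℝ) (hU : U.rank = k) :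
    ((G - G * U * (Uᵀ * G * U)⁻¹ * Uᵀ * G + A * U * (Uᵀ * A * U)⁻¹ * Uᵀ * A) - A).PosSemidef ∧
      (η • A -
        (G - G * U * (Uᵀ * G * U)⁻¹ * Uᵀ * G + A * U * (Uᵀ * A * U)⁻¹ * Uᵀ * A)).PosSemidef :=
  blockBFGS_loewner_bounds_general A G hA hG η hη hAG hGη U hU
end

section
/- Let A, G be d×d symmetric positive-definite matrices with A ⪯ G ⪯ ηA for some η ≥ 1, and let U ∈ ℝ^{d×k} be full rank with k ≤ d. Define the block DFP update G₊ = AU(UᵀAU)⁻¹UᵀA + (I_d − AU(UᵀAU)⁻¹Uᵀ)G(I_d − U(UᵀAU)⁻¹UᵀA). Then A ⪯ G₊ ⪯ ηA. -/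
open Matrix

lemma smul_posSemidef {n : ℕ} {c : ℝ} (hc : 0 ≤ c) {M : Matrix (Fin n) (Fin n) ℝ}
    (hM : M.PosSemidef) : (c • M).PosSemidef := by
  rw [posSemidef_iff_dotProduct_mulVec]
  constructor
  · have ht : Mᵀ = M := by
      rw [← conjTranspose_eq_transpose_of_trivial]; exact hM.1
    simp [Matrix.IsHermitian, conjTranspose_eq_transpose_of_trivial, transpose_smul, ht]
  · intro x
    rw [smul_mulVec, dotProduct_smul, smul_eq_mul]
    exact mul_nonneg hc ((posSemidef_iff_dotProduct_mulVec.mp hM).2 x)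

/-- **Lemma 5.2 (block DFP part)**: if `A ⪯ G ⪯ ηA` then the block DFP update
`G₊ = AU(UᵀAU)⁻¹UᵀA + (I − AU(UᵀAU)⁻¹Uᵀ) G (I − U(UᵀAU)⁻¹UᵀA)`
satisfies `A ⪯ G₊ ⪯ ηA`. -/
theorem blockDFP_loewner_bounds {d k : ℕ} (hk : k ≤ d)
    (A G : Matrix (Fin d) (Fin d) ℝ) (hA : A.PosDef) (hG : G.PosDef)
    (η : ℝ) (hη : 1 ≤ η)
    (hAG : (G - A).PosSemidef) (hGη : (η • A - G).PosSemidef)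
    (U : Matrix (Fin d) (Fin k) ℝ) (hU : U.rank = k) :
    ((A * U * (Uᵀ * A * U)⁻¹ * Uᵀ * A +
        (1 - A * U * (Uᵀ * A * U)⁻¹ * Uᵀ) * G * (1 - U * (Uᵀ * A * U)⁻¹ * Uᵀ * A)) -
          A).PosSemidef ∧
      (η • A -
        (A * U * (Uᵀ * A * U)⁻¹ * Uᵀ * A +
          (1 - A * U * (Uᵀ * A * U)⁻¹ * Uᵀ) * G *
            (1 - U * (Uᵀ * A * U)⁻¹ * Uᵀ * A))).PosSemidef := by
  have hAt : Aᵀ = A := by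
    rw [← conjTranspose_eq_transpose_of_trivial]; exact hA.isHermitian
  -- injectivity of U as a linear map
  have hker : LinearMap.ker U.mulVecLin = ⊥ := by
    have hr : U.rank + Module.finrank ℝ (LinearMap.ker U.mulVecLin) = k := by
      simpa [Matrix.rank] using LinearMap.finrank_range_add_finrank_ker U.mulVecLin
    have h0 : Module.finrank ℝ (LinearMap.ker U.mulVecLin) = 0 := by omega
    exact Submodule.finrank_eq_zero.mp h0
  have hUinj : Function.Injective (U.mulVec) := by
    have := LinearMap.ker_eq_bot.mp hker
    intro x y hxy
    exact this (by simpa using hxy)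
  set S := Uᵀ * A * U with hSdef
  have hSpd : S.PosDef := by
    rw [posDef_iff_dotProduct_mulVec]
    constructor
    · rw [Matrix.IsHermitian, conjTranspose_eq_transpose_of_trivial]
      simp [hSdef, transpose_mul, hAt, Matrix.mul_assoc]
    · intro x hx
      have hUx : U *ᵥ x ≠ 0 := fun h => hx (hUinj (by simpa using h))
      have e : dotProduct x (S *ᵥ x) = dotProduct (U *ᵥ x) (A *ᵥ (U *ᵥ x)) := by
        rw [hSdef, ← mulVec_mulVec, ← mulVec_mulVec, dotProduct_mulVec, vecMul_transpose]
      rw [star_trivial, e]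
      simpa [star_trivial] using (posDef_iff_dotProduct_mulVec.mp hA).2 hUx
  have hSu : IsUnit S.det := hSpd.det_pos.ne'.isUnit
  have hSt : Sᵀ = S := by
    rw [hSdef]; simp [transpose_mul, hAt, Matrix.mul_assoc]
  have hSit : (S⁻¹)ᵀ = S⁻¹ := by rw [transpose_nonsing_inv, hSt]
  -- the key collapsing identity
  have hS1 : ∀ X : Matrix (Fin k) (Fin d) ℝ, Uᵀ * (A * (U * (S⁻¹ * X))) = X := by
    intro X
    calc Uᵀ * (A * (U * (S⁻¹ * X))) = Uᵀ * A * U * S⁻¹ * X := by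
          simp only [Matrix.mul_assoc]
      _ = S * S⁻¹ * X := by rw [← hSdef]
      _ = X := by rw [mul_nonsing_inv _ hSu, Matrix.one_mul]
  set B : Matrix (Fin d) (Fin d) ℝ := 1 - U * S⁻¹ * Uᵀ * A with hBdef
  have hBt : Bᵀ = 1 - A * U * S⁻¹ * Uᵀ := by
    rw [hBdef, transpose_sub, transpose_one]
    congr 1
    simp [transpose_mul, hAt, hSit, Matrix.mul_assoc]
  have hP : (A * U * S⁻¹ * Uᵀ * A).PosSemidef := by
    have h := (hSpd.inv.posSemidef).conjTranspose_mul_mul_same (Uᵀ * A)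
    rw [conjTranspose_eq_transpose_of_trivial, transpose_mul, transpose_transpose, hAt] at h
    simpa [Matrix.mul_assoc] using h
  have key1 : A * U * S⁻¹ * Uᵀ * A + Bᵀ * G * B - A = Bᵀ * (G - A) * B := by
    rw [hBt, hBdef]
    simp only [Matrix.mul_sub, Matrix.sub_mul, Matrix.mul_one, Matrix.one_mul,
      Matrix.mul_assoc, hS1]
    abel
  have key2 : η • A - (A * U * S⁻¹ * Uᵀ * A + Bᵀ * G * B)
      = (η - 1) • (A * U * S⁻¹ * Uᵀ * A) + Bᵀ * (η • A - G) * B := by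
    rw [hBt, hBdef]
    simp only [Matrix.mul_sub, Matrix.sub_mul, Matrix.mul_one, Matrix.one_mul,
      Matrix.mul_smul, Matrix.smul_mul, smul_sub, sub_smul, one_smul,
      Matrix.mul_assoc, hS1]
    module
  have hcong : ∀ M : Matrix (Fin d) (Fin d) ℝ, M.PosSemidef → (Bᵀ * M * B).PosSemidef := by
    intro M hM
    have := hM.conjTranspose_mul_mul_same B
    rwa [conjTranspose_eq_transpose_of_trivial] at this
  refine ⟨?_, ?_⟩
  · rw [← hBt, key1]
    exact hcong _ hAG
  · rw [← hBt, key2]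
    exact (smul_posSemidef (by linarith) hP).add (hcong _ hGη)
end

section
/- Let P ∈ ℝ^{d×r} be column orthonormal with r ≤ d, and let v be a d-dimensional Gaussian random vector with mean zero and covariance matrix PPᵀ. Then E[vvᵀ/(vᵀv)] = PPᵀ/r. -/
/-!
Write `v = P w`. Since `Pᵀ P = 1` we have `vᵀ v = wᵀ w`, so the `(i, j)` entry equals
`E[(P_i ⬝ w) (P_j ⬝ w) / wᵀ w]`, and it suffices that `E[w_k w_l / wᵀ w] = δ_kl / r`.
For `k ≠ l`, flipping the sign of `w_k` preserves the law of `w` and negates `w_k w_l / wᵀ w`.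
The diagonal terms are equal to each other since permuting coordinates preserves the law,
and they sum to `1` because `w ≠ 0` almost surely.
-/

open Matrix MeasureTheory ProbabilityTheory

section
variable {ι : Type*} [Fintype ι]

lemma abs_mul_le_dotProduct_self {R : Type*} [CommRing R] [LinearOrder R] [IsStrictOrderedRing R]
    (x : ι → R) (k l : ι) : |x k * x l| ≤ x ⬝ᵥ x := by
  have hk : x k * x k ≤ x ⬝ᵥ x :=
    Finset.single_le_sum (fun i _ => mul_self_nonneg (x i)) (Finset.mem_univ k)
  have hl : x l * x l ≤ x ⬝ᵥ x :=
    Finset.single_le_sum (fun i _ => mul_self_nonneg (x i)) (Finset.mem_univ l)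
  rw [abs_le]
  constructor <;> nlinarith [sq_nonneg (x k + x l), sq_nonneg (x k - x l)]

lemma measurable_mul_div_dotProduct_self (k l : ι) :
    Measurable fun x : ι → ℝ => x k * x l / (x ⬝ᵥ x) := by
  unfold dotProduct; fun_prop

lemma integrable_mul_div_dotProduct_self (μ : Measure (ι → ℝ)) [IsFiniteMeasure μ] (k l : ι) :
    Integrable (fun x : ι → ℝ => x k * x l / (x ⬝ᵥ x)) μ := by
  refine .of_bound (measurable_mul_div_dotProduct_self k l).aestronglyMeasurable 1
    (ae_of_all _ fun x => ?_)
  have hx : 0 ≤ x ⬝ᵥ x := dotProduct_self_star_nonneg x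
  rw [Real.norm_eq_abs, abs_div, abs_of_nonneg hx]
  exact div_le_one_of_le₀ (abs_mul_le_dotProduct_self x k l) hx

variable (ν : Measure ℝ) [SigmaFinite ν]

lemma measurePreserving_piCongrRight_neg [ν.IsNegInvariant] [DecidableEq ι] (k : ι) :
    MeasurePreserving
      (MeasurableEquiv.piCongrRight fun i => if i = k then .neg ℝ else .refl ℝ)
      (Measure.pi fun _ : ι => ν) (Measure.pi fun _ : ι => ν) := by
  refine measurePreserving_pi _ _ fun i => ?_
  by_cases h : i = k
  · simpa [h] using Measure.measurePreserving_neg ν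
  · simpa [h] using MeasurePreserving.id ν

lemma integral_mul_div_dotProduct_self_of_ne [ν.IsNegInvariant] {k l : ι} (hkl : k ≠ l) :
    ∫ x, x k * x l / (x ⬝ᵥ x) ∂Measure.pi (fun _ : ι => ν) = 0 := by
  classical
  have hflip : ∀ x : ι → ℝ,
      let y := (MeasurableEquiv.piCongrRight fun i => if i = k then .neg ℝ else .refl ℝ) x
      y k * y l / (y ⬝ᵥ y) = -(x k * x l / (x ⬝ᵥ x)) := by
    intro x y
    have hy : ∀ i, y i = if i = k then -x i else x i := fun i => by
      by_cases h : i = k <;> simp [y, MeasurableEquiv.piCongrRight, h]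
    have hyy : y ⬝ᵥ y = x ⬝ᵥ x := Finset.sum_congr rfl fun i _ => by
      rw [hy]; split_ifs <;> ring
    rw [hyy, hy, hy, if_pos rfl, if_neg hkl.symm, neg_mul, neg_div]
  have h := (measurePreserving_piCongrRight_neg ν k).integral_comp'
    fun x : ι → ℝ => x k * x l / (x ⬝ᵥ x)
  simp only [hflip, integral_neg] at h
  linarith

lemma integral_mul_self_div_dotProduct_self_eq (k m : ι) :
    ∫ x, x k * x k / (x ⬝ᵥ x) ∂Measure.pi (fun _ : ι => ν) =
      ∫ x, x m * x m / (x ⬝ᵥ x) ∂Measure.pi (fun _ : ι => ν) := by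
  classical
  have hswap : ∀ x : ι → ℝ,
      let y := MeasurableEquiv.arrowCongr' (Equiv.swap k m) (.refl ℝ) x
      y k * y k / (y ⬝ᵥ y) = x m * x m / (x ⬝ᵥ x) := by
    intro x y
    have hy : ∀ i, y i = x (Equiv.swap k m i) := fun i => by
      simp [y, MeasurableEquiv.arrowCongr', Equiv.arrowCongr']
    have hyy : y ⬝ᵥ y = x ⬝ᵥ x := by
      simp only [dotProduct, hy]
      exact Equiv.sum_comp (Equiv.swap k m) fun i => x i * x i
    rw [hyy, hy, Equiv.swap_apply_left]
  have h := (measurePreserving_arrowCongr' (fun _ => ν) (fun _ => ν) (Equiv.swap k m) (.refl ℝ)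
    fun _ => .id ν).integral_comp' fun x : ι → ℝ => x k * x k / (x ⬝ᵥ x)
  simp only [hswap] at h
  exact h.symm

lemma integral_mul_self_div_dotProduct_self [IsProbabilityMeasure ν] [NullSingletonClass ν]
    [Nonempty ι] (k : ι) :
    ∫ x, x k * x k / (x ⬝ᵥ x) ∂Measure.pi (fun _ : ι => ν) = 1 / Fintype.card ι := by
  have hsum : ∑ m : ι, ∫ x, x m * x m / (x ⬝ᵥ x) ∂Measure.pi (fun _ : ι => ν) = 1 := by
    rw [← integral_finsetSum _ fun m _ => integrable_mul_div_dotProduct_self _ m m]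
    have hone : (fun x : ι → ℝ => ∑ m, x m * x m / (x ⬝ᵥ x)) =ᵐ[Measure.pi fun _ : ι => ν]
        fun _ => 1 := by
      filter_upwards [Measure.ae_ne _ 0] with x hx
      rw [← Finset.sum_div]
      exact div_self (dotProduct_self_eq_zero.not.mpr hx)
    simp [integral_congr_ae hone]
  simp only [integral_mul_self_div_dotProduct_self_eq ν _ k, Finset.sum_const, Finset.card_univ,
    nsmul_eq_mul] at hsum
  rw [eq_div_iff (by positivity)]
  linarith

theorem integral_dotProduct_mul_dotProduct_div_dotProduct_self [IsProbabilityMeasure ν]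
    [ν.IsNegInvariant] [NullSingletonClass ν] [Nonempty ι] (a b : ι → ℝ) :
    ∫ x, (a ⬝ᵥ x) * (b ⬝ᵥ x) / (x ⬝ᵥ x) ∂Measure.pi (fun _ : ι => ν) =
      a ⬝ᵥ b / Fintype.card ι := by
  classical
  have hexpand : ∀ x : ι → ℝ, (a ⬝ᵥ x) * (b ⬝ᵥ x) / (x ⬝ᵥ x) =
      ∑ k, ∑ l, a k * b l * (x k * x l / (x ⬝ᵥ x)) := fun x => by
    simp only [dotProduct, Finset.sum_mul_sum, Finset.sum_div]
    exact Finset.sum_congr rfl fun k _ => Finset.sum_congr rfl fun l _ => by ring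
  have hint : ∀ k l, Integrable (fun x : ι → ℝ => a k * b l * (x k * x l / (x ⬝ᵥ x)))
      (Measure.pi fun _ : ι => ν) := fun k l =>
    (integrable_mul_div_dotProduct_self _ k l).const_mul _
  simp only [hexpand]
  rw [integral_finsetSum _ fun k _ => integrable_finsetSum _ fun l _ => hint k l]
  simp only [integral_finsetSum _ fun l _ => hint _ l, integral_const_mul]
  rw [dotProduct, Finset.sum_div]
  refine Finset.sum_congr rfl fun k _ => ?_
  rw [Finset.sum_eq_single k (fun l _ hlk => by
      rw [integral_mul_div_dotProduct_self_of_ne ν (Ne.symm hlk), mul_zero])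
    (by simp), integral_mul_self_div_dotProduct_self ν k, mul_one_div]

end

instance isNegInvariant_gaussianReal_zero (v : NNReal) : (gaussianReal 0 v).IsNegInvariant :=
  ⟨gaussianReal_map_neg.trans (by rw [neg_zero])⟩

lemma dotProduct_mulVec_self_of_transpose_mul_self_eq_one {R m n : Type*} [CommSemiring R]
    [Fintype m] [Fintype n] [DecidableEq n] {P : Matrix m n R} (hP : Pᵀ * P = 1) (x : n → R) :
    (P *ᵥ x) ⬝ᵥ (P *ᵥ x) = x ⬝ᵥ x := by
  rw [dotProduct_mulVec, ← mulVec_transpose, mulVec_mulVec, hP, one_mulVec]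

theorem expectation_normalized_outer_product_general {d r : ℕ} (hr : 0 < r)
    (P : Matrix (Fin d) (Fin r) ℝ) (hP : Pᵀ * P = 1)
    {Ω : Type*} [MeasureSpace Ω] [IsProbabilityMeasure (ℙ : Measure Ω)]
    (w : Ω → Fin r → ℝ)
    (hw : Measure.map w ℙ = Measure.pi fun _ : Fin r => gaussianReal 0 1)
    (v : Ω → Fin d → ℝ) (hv : ∀ ω, v ω = P.mulVec (w ω)) :
    ∀ i j : Fin d,
      (∫ ω, v ω i * v ω j / (∑ l, v ω l * v ω l) ∂ℙ) = (P * Pᵀ) i j / r := by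
  intro i j
  have : NeZero r := ⟨hr.ne'⟩
  have : NullSingletonClass (gaussianReal 0 1) := nullSingletonClass_gaussianReal one_ne_zero
  have hw_ae : AEMeasurable w ℙ := .of_map_ne_zero (hw ▸ IsProbabilityMeasure.ne_zero _)
  let f : (Fin r → ℝ) → ℝ := fun x => (P i ⬝ᵥ x) * (P j ⬝ᵥ x) / (x ⬝ᵥ x)
  have hf : Measurable f := by unfold f dotProduct; fun_prop
  calc ∫ ω, v ω i * v ω j / (∑ l, v ω l * v ω l) ∂ℙ
      = ∫ ω, f (w ω) ∂ℙ := by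
        simp_rw [hv]
        refine integral_congr_ae (ae_of_all _ fun ω => ?_)
        change _ / ((P *ᵥ w ω) ⬝ᵥ (P *ᵥ w ω)) = _
        rw [dotProduct_mulVec_self_of_transpose_mul_self_eq_one hP]
        rfl
    _ = ∫ x, f x ∂Measure.pi fun _ : Fin r => gaussianReal 0 1 := by
        rw [← hw, integral_map hw_ae hf.aestronglyMeasurable]
    _ = (P * Pᵀ) i j / r := by
        rw [integral_dotProduct_mul_dotProduct_div_dotProduct_self, Fintype.card_fin]; rfl

/-- **Lemma A.1**: if `P ∈ ℝ^{d×r}` is column orthonormal and `v ∼ N_d(0, PPᵀ)`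
(i.e. `v = Pw` with `w` a standard Gaussian vector in `ℝ^r`), then
`E[vvᵀ/(vᵀv)] = PPᵀ/r` entrywise. -/
theorem expectation_normalized_outer_product {d r : ℕ} (hr : 0 < r) (hrd : r ≤ d)
    (P : Matrix (Fin d) (Fin r) ℝ) (hP : Pᵀ * P = 1)
    {Ω : Type*} [MeasureSpace Ω] [IsProbabilityMeasure (ℙ : Measure Ω)]
    (w : Ω → Fin r → ℝ)
    (hw : Measure.map w ℙ = Measure.pi fun _ : Fin r => gaussianReal 0 1)
    (v : Ω → Fin d → ℝ) (hv : ∀ ω, v ω = P.mulVec (w ω)) :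
    ∀ i j : Fin d,
      (∫ ω, v ω i * v ω j / (∑ l, v ω l * v ω l) ∂ℙ) = (P * Pᵀ) i j / r :=
  expectation_normalized_outer_product_general hr P hP w hw v hv
end

section
/- For any symmetric positive definite d×d matrices G and H with H ⪯ G, it holds that G ⪯ (1 + κ̂·d·tr(G − H)/tr(H))·H, where κ̂ is the condition number of H (the ratio of its largest to smallest eigenvalue). Moreover, if additionally G ⪯ ηH for some η ≥ 1, then tr(G − H)/tr(H) ≤ η − 1. -/
/-!
Let `m` be the smallest eigenvalue of `H` and `t = tr (G - H)`. A positive semidefinite matrix is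
dominated by its trace times the identity, and `m • 1 ⪯ H`, so `G - H ⪯ t • 1 ⪯ (t / m) • H`.
Since `tr H ≤ d λ_max(H)`, the coefficient `t / m` is at most `κ̂ d t / tr H`.
The second claim is the nonnegativity of the trace of `η H - G`.
-/

open Matrix
open scoped MatrixOrder ComplexOrder

namespace Matrix

variable {n 𝕜 : Type*} [Fintype n] [DecidableEq n] [RCLike 𝕜] {A : Matrix n n 𝕜}

lemma IsHermitian.smul_one_le_of_le_eigenvalues (hA : A.IsHermitian) {r : ℝ}
    (h : ∀ i, r ≤ hA.eigenvalues i) : r • (1 : Matrix n n 𝕜) ≤ A := by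
  rw [← Algebra.algebraMap_eq_smul_one]
  refine algebraMap_le_of_le_spectrum ?_ hA.isSelfAdjoint
  simpa [hA.spectrum_real_eq_range_eigenvalues] using h

lemma IsHermitian.le_smul_one_of_eigenvalues_le (hA : A.IsHermitian) {r : ℝ}
    (h : ∀ i, hA.eigenvalues i ≤ r) : A ≤ r • (1 : Matrix n n 𝕜) := by
  rw [← Algebra.algebraMap_eq_smul_one]
  refine le_algebraMap_of_spectrum_le ?_ hA.isSelfAdjoint
  simpa [hA.spectrum_real_eq_range_eigenvalues] using h

lemma IsHermitian.iInf_eigenvalues_smul_one_le (hA : A.IsHermitian) :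
    (⨅ i, hA.eigenvalues i) • (1 : Matrix n n 𝕜) ≤ A :=
  hA.smul_one_le_of_le_eigenvalues (Finite.ciInf_le _)

lemma IsHermitian.re_trace_eq_sum_eigenvalues (hA : A.IsHermitian) :
    RCLike.re A.trace = ∑ i, hA.eigenvalues i := by
  simp [hA.trace_eq_sum_eigenvalues]

lemma IsHermitian.re_trace_le_card_mul_iSup_eigenvalues (hA : A.IsHermitian) :
    RCLike.re A.trace ≤ Fintype.card n * ⨆ i, hA.eigenvalues i := by
  rw [hA.re_trace_eq_sum_eigenvalues, ← nsmul_eq_mul, ← Finset.card_univ]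
  exact Finset.sum_le_card_nsmul _ _ _ fun i _ ↦ Finite.le_ciSup _ i

lemma PosSemidef.eigenvalues_le_re_trace (hA : A.PosSemidef) (i : n) :
    hA.1.eigenvalues i ≤ RCLike.re A.trace := by
  rw [hA.1.re_trace_eq_sum_eigenvalues]
  exact Finset.single_le_sum (fun j _ ↦ hA.eigenvalues_nonneg j) (Finset.mem_univ i)

lemma PosSemidef.le_re_trace_smul_one (hA : A.PosSemidef) :
    A ≤ RCLike.re A.trace • (1 : Matrix n n 𝕜) :=
  hA.1.le_smul_one_of_eigenvalues_le hA.eigenvalues_le_re_trace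

lemma PosDef.iInf_eigenvalues_pos [Nonempty n] (hA : A.PosDef) : 0 < ⨅ i, hA.1.eigenvalues i := by
  obtain ⟨i, hi⟩ := exists_eq_ciInf_of_finite (f := hA.1.eigenvalues)
  exact hi ▸ hA.eigenvalues_pos i

end Matrix

theorem loewner_bound_from_trace_general {d : ℕ} (hd : 0 < d)
    (G H : Matrix (Fin d) (Fin d) ℝ) (hH : H.PosDef)
    (hHG : (G - H).PosSemidef) :
    haveI : Nonempty (Fin d) := Fin.pos_iff_nonempty.mp hd
    (((1 + ((⨆ i, hH.1.eigenvalues i) / (⨅ i, hH.1.eigenvalues i)) * d *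
        ((G - H).trace / H.trace)) • H - G).PosSemidef) ∧
      (∀ η : ℝ, 1 ≤ η → (η • H - G).PosSemidef →
        (G - H).trace / H.trace ≤ η - 1) := by
  have : Nonempty (Fin d) := Fin.pos_iff_nonempty.mp hd
  set m := ⨅ i, hH.1.eigenvalues i
  set M := ⨆ i, hH.1.eigenvalues i
  set t := (G - H).trace
  have hm : 0 < m := hH.iInf_eigenvalues_pos
  have ht : 0 ≤ t := hHG.trace_nonneg
  have htrH : 0 < H.trace := hH.trace_pos
  have hdM : H.trace ≤ d * M := by simpa using hH.1.re_trace_le_card_mul_iSup_eigenvalues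
  have hc : t / m ≤ M / m * d * (t / H.trace) := calc
    t / m = t / H.trace * (H.trace / m) := by field_simp
    _ ≤ t / H.trace * (d * M / m) := by gcongr
    _ = M / m * d * (t / H.trace) := by ring
  constructor
  · rw [← Matrix.le_iff]
    calc G = H + (G - H) := by abel
      _ ≤ H + t • 1 := by gcongr; exact hHG.le_re_trace_smul_one
      _ = H + (t / m) • (m • 1) := by rw [smul_smul, div_mul_cancel₀ _ hm.ne']
      _ ≤ H + (t / m) • H := by gcongr; exact hH.1.iInf_eigenvalues_smul_one_le
      _ ≤ H + (M / m * d * (t / H.trace)) • H := by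
        gcongr; exact nonneg_iff_posSemidef.mpr hH.posSemidef
      _ = _ := by rw [add_smul, one_smul, add_comm]
  · intro η _ hGη
    have htr := hGη.trace_nonneg
    rw [trace_sub, trace_smul, smul_eq_mul] at htr
    rw [div_le_iff₀ htrH, show t = G.trace - H.trace from trace_sub G H]
    linarith

/-- **Lemma D.1**: for symmetric positive definite `G, H` with `H ⪯ G`,
`G ⪯ (1 + κ̂ d · tr(G−H)/tr(H)) H` where `κ̂ = λ_max(H)/λ_min(H)`; and if moreover
`G ⪯ η H` for some `η ≥ 1`, then `tr(G−H)/tr(H) ≤ η − 1`. -/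
theorem loewner_bound_from_trace {d : ℕ} (hd : 0 < d)
    (G H : Matrix (Fin d) (Fin d) ℝ) (hG : G.PosDef) (hH : H.PosDef)
    (hHG : (G - H).PosSemidef) :
    haveI : Nonempty (Fin d) := Fin.pos_iff_nonempty.mp hd
    (((1 + ((⨆ i, hH.1.eigenvalues i) / (⨅ i, hH.1.eigenvalues i)) * d *
        ((G - H).trace / H.trace)) • H - G).PosSemidef) ∧
      (∀ η : ℝ, 1 ≤ η → (η • H - G).PosSemidef →
        (G - H).trace / H.trace ≤ η - 1) :=
  loewner_bound_from_trace_general hd G H hH hHG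
end

section
/- For any symmetric positive definite d×d matrices G and H with H ⪯ G, it holds that G ⪯ (1 + tr(H⁻¹(G − H)))·H. Moreover, if additionally G ⪯ ηH for some η ≥ 1, then tr(H⁻¹(G − H)) ≤ d(η − 1). -/
/-!
Factor `H = B* B` with `B` invertible and put `N = (B⁻¹)* (G - H) B⁻¹ ⪰ 0`; then
`σ_H(G) = tr N`. A positive semidefinite matrix lies below its trace times the identity, since
its eigenvalues are nonnegative and sum to the trace. Conjugating `N ⪯ (tr N) 1` back by `B`
gives `G - H ⪯ σ_H(G) H`. Conversely `G ⪯ η H` becomes `N ⪯ (η - 1) 1`, and taking traces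
gives `σ_H(G) ≤ d (η - 1)`.
-/

open Matrix
open scoped ComplexOrder

namespace Matrix
variable {𝕜 n : Type*} [RCLike 𝕜] [Fintype n] [DecidableEq n]

theorem PosSemidef.posSemidef_trace_smul_one_sub {A : Matrix n n 𝕜} (hA : A.PosSemidef) :
    (A.trace • (1 : Matrix n n 𝕜) - A).PosSemidef := by
  set U : Matrix n n 𝕜 := (hA.1.eigenvectorUnitary : Matrix n n 𝕜)
  set ev := hA.1.eigenvalues
  have hspec : A = U * diagonal (RCLike.ofReal ∘ ev) * star U := by
    simpa using hA.1.spectral_theorem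
  have hUU : U * star U = 1 := Unitary.mul_star_self_of_mem (SetLike.coe_mem _)
  have htr : A.trace = ∑ j, (ev j : 𝕜) := hA.1.trace_eq_sum_eigenvalues
  have hdiag : A.trace • (1 : Matrix n n 𝕜) - A =
      U * diagonal (fun i ↦ ((∑ j, ev j - ev i : ℝ) : 𝕜)) * star U := by
    have : diagonal (fun i ↦ ((∑ j, ev j - ev i : ℝ) : 𝕜)) =
        (∑ j, (ev j : 𝕜)) • 1 - diagonal (RCLike.ofReal ∘ ev) := by
      ext i j; rcases eq_or_ne i j with rfl | h <;> simp [*]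
    rw [this, mul_sub, sub_mul, mul_smul_comm, smul_mul_assoc, mul_one, hUU, ← hspec, htr]
  rw [hdiag, Unitary.isUnit_coe.posSemidef_star_right_conjugate_iff, posSemidef_diagonal_iff]
  intro i
  have := Finset.single_le_sum (fun j _ ↦ hA.eigenvalues_nonneg j) (Finset.mem_univ i)
  exact_mod_cast sub_nonneg.2 this

theorem trace_inv_star_mul_self_mul (B M : Matrix n n 𝕜) :
    ((star B * B)⁻¹ * M).trace = (star B⁻¹ * M * B⁻¹).trace := by
  rw [mul_inv_rev, star_eq_conjTranspose, star_eq_conjTranspose, conjTranspose_nonsing_inv,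
    mul_assoc, trace_mul_comm, mul_assoc]

theorem IsUnit.star_inv_mul_smul_star_mul_self_sub_mul_inv {B : Matrix n n 𝕜} (hB : IsUnit B)
    (c : 𝕜) (M : Matrix n n 𝕜) :
    star B⁻¹ * (c • (star B * B) - M) * B⁻¹ = c • 1 - star B⁻¹ * M * B⁻¹ := by
  have hBinv : B * B⁻¹ = 1 := mul_nonsing_inv B ((isUnit_iff_isUnit_det B).1 hB)
  have hstar : star B⁻¹ * star B = 1 := by rw [← star_mul, hBinv, star_one]
  rw [mul_sub, sub_mul, mul_smul_comm, smul_mul_assoc, ← mul_assoc (star B⁻¹), hstar, one_mul,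
    hBinv]

theorem PosDef.exists_isUnit_eq_star_mul_self {H : Matrix n n 𝕜} (hH : H.PosDef) :
    ∃ B : Matrix n n 𝕜, IsUnit B ∧ H = star B * B := by
  open scoped MatrixOrder in
  exact CStarAlgebra.isStrictlyPositive_iff_eq_star_mul_self.mp hH.isStrictlyPositive

theorem PosDef.posSemidef_trace_inv_mul_smul_sub {H M : Matrix n n 𝕜} (hH : H.PosDef)
    (hM : M.PosSemidef) : ((H⁻¹ * M).trace • H - M).PosSemidef := by
  obtain ⟨B, hB, rfl⟩ := hH.exists_isUnit_eq_star_mul_self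
  rw [← (isUnit_nonsing_inv_iff.2 hB).posSemidef_star_left_conjugate_iff,
    hB.star_inv_mul_smul_star_mul_self_sub_mul_inv, trace_inv_star_mul_self_mul]
  exact (hM.conjTranspose_mul_mul_same B⁻¹).posSemidef_trace_smul_one_sub

theorem PosDef.trace_inv_mul_le {H M : Matrix n n 𝕜} (hH : H.PosDef) {c : 𝕜}
    (h : (c • H - M).PosSemidef) : (H⁻¹ * M).trace ≤ Fintype.card n * c := by
  obtain ⟨B, hB, rfl⟩ := hH.exists_isUnit_eq_star_mul_self
  have := ((isUnit_nonsing_inv_iff.2 hB).posSemidef_star_left_conjugate_iff.2 h).trace_nonneg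
  rwa [hB.star_inv_mul_smul_star_mul_self_sub_mul_inv, trace_sub, trace_smul, trace_one,
    ← trace_inv_star_mul_self_mul, smul_eq_mul, sub_nonneg, mul_comm] at this

end Matrix

theorem loewner_bound_from_sigma_general {d : ℕ}
    (G H : Matrix (Fin d) (Fin d) ℝ) (hH : H.PosDef)
    (hHG : (G - H).PosSemidef) :
    (((1 + (H⁻¹ * (G - H)).trace) • H - G).PosSemidef) ∧
      (∀ η : ℝ, 1 ≤ η → (η • H - G).PosSemidef →
        (H⁻¹ * (G - H)).trace ≤ d * (η - 1)) := by
  have hshift (c : ℝ) : c • H - G = (c - 1) • H - (G - H) := by module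
  refine ⟨?_, fun η _ hηHG ↦ ?_⟩
  · rw [hshift, add_sub_cancel_left]
    exact hH.posSemidef_trace_inv_mul_smul_sub hHG
  · rw [hshift] at hηHG
    simpa using hH.trace_inv_mul_le hηHG

/-- **Lemma E.3**: for symmetric positive definite `G, H` with `H ⪯ G`,
`G ⪯ (1 + tr(H⁻¹(G−H))) H`; and if moreover `G ⪯ η H` for some `η ≥ 1`, then
`tr(H⁻¹(G−H)) ≤ d(η − 1)`. -/
theorem loewner_bound_from_sigma {d : ℕ}
    (G H : Matrix (Fin d) (Fin d) ℝ) (hG : G.PosDef) (hH : H.PosDef)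
    (hHG : (G - H).PosSemidef) :
    (((1 + (H⁻¹ * (G - H)).trace) • H - G).PosSemidef) ∧
      (∀ η : ℝ, 1 ≤ η → (η • H - G).PosSemidef →
        (H⁻¹ * (G - H)).trace ≤ d * (η - 1)) :=
  loewner_bound_from_sigma_general G H hH hHG
end

section
/- Let {λ_t} and {η̃_t} be positive real sequences with η̃_t ≥ 1 for all t, satisfying: (i) λ_{t+1} ≤ (1 − 1/η̃_t)λ_t + m₁λ_t²/2 + m₁²λ_t³/(4η̃_t) whenever m₁λ_t ≤ 2, and (ii) η̃_{t+1} ≤ (1 + m₂λ_t)²η̃_t, for some constants m₁, m₂ > 0. If m·λ₀ ≤ ln(3/2)/(4η̃₀) where m = max{m₁, m₂}, then for all t ≥ 0: η̃_t ≤ η̃₀·exp(2m·∑_{i=0}^{t−1} λ_i) ≤ (3/2)η̃₀ and λ_t ≤ (1 − 1/(2η̃₀))^t·λ₀. -/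
/-!
The bound on `η̃_t` holds unconditionally: `(1 + m₂ λ)² ≤ exp (2 m λ)`, so each step multiplies
`η̃` by at most `exp (2 m λ_t)`. The decay of `λ_t` is proved by strong induction: if
`λ_i ≤ r^i λ₀` for `i ≤ t`, with `r = 1 - 1/(2η̃₀)`, then `∑_{i<t} λ_i ≤ λ₀/(1 - r) = 2η̃₀λ₀`, so the
smallness of `λ₀` gives `exp (2m ∑_{i<t} λ_i) ≤ 3/2`, hence `η̃_t ≤ (3/2) η̃₀`, and with
`m₁λ_t ≤ 1/(8η̃₀)` the recursion for `λ` contracts by the factor `r`.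
-/

open Real Finset

lemma contraction_factor_le {x e h : ℝ} (hx : 0 ≤ x) (hxh : x ≤ 1 / (8 * h)) (hh : 1 ≤ h)
    (he : 0 < e) (heh : e ≤ 3 / 2 * h) :
    1 - 1 / e + x / 2 + x ^ 2 / (4 * e) ≤ 1 - 1 / (2 * h) := by
  have hh0 : 0 < h := by linarith
  have hinv_e : 2 / 3 * h⁻¹ ≤ e⁻¹ := by
    rw [← div_eq_mul_inv, div_le_iff₀ hh0, ← div_eq_inv_mul, le_div_iff₀ he]
    linarith
  have hxh' : x ≤ h⁻¹ / 8 := by rwa [one_div, mul_inv, mul_comm, ← div_eq_mul_inv] at hxh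
  have hinv_h : h⁻¹ ≤ 1 := inv_le_one_of_one_le₀ hh
  have hinv_h0 : 0 < h⁻¹ := inv_pos.2 hh0
  have hx2 : x ^ 2 ≤ 1 / 64 := by nlinarith
  -- `1/e ≥ 2/(3h)`, while `x/2 ≤ 1/(16h)` and the cubic term costs a factor `1 - x²/4 ≥ 255/256`
  simp only [mul_inv, div_eq_mul_inv]
  nlinarith [mul_le_mul_of_nonneg_left hx2 (inv_pos.2 he).le]

lemma contraction_step_le {l e h a : ℝ} (hl : 0 ≤ l) (ha : 0 ≤ a) (hal : a * l ≤ 1 / (8 * h))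
    (hh : 1 ≤ h) (he : 0 < e) (heh : e ≤ 3 / 2 * h) :
    (1 - 1 / e) * l + a * l ^ 2 / 2 + a ^ 2 * l ^ 3 / (4 * e) ≤ (1 - 1 / (2 * h)) * l :=
  calc (1 - 1 / e) * l + a * l ^ 2 / 2 + a ^ 2 * l ^ 3 / (4 * e)
      = (1 - 1 / e + a * l / 2 + (a * l) ^ 2 / (4 * e)) * l := by ring
    _ ≤ (1 - 1 / (2 * h)) * l :=
      mul_le_mul_of_nonneg_right (contraction_factor_le (mul_nonneg ha hl) hal hh he heh) hl

lemma sq_one_add_le_exp_two_mul {a : ℝ} (ha : 0 ≤ 1 + a) : (1 + a) ^ 2 ≤ exp (2 * a) :=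
  calc (1 + a) ^ 2 ≤ exp a ^ 2 := pow_le_pow_left₀ ha (by linarith [add_one_le_exp a]) 2
    _ = exp (2 * a) := by rw [← exp_nat_mul]; norm_num

lemma le_mul_exp_two_mul_sum {u a : ℕ → ℝ} {c m : ℝ} (hc : 0 ≤ c) (hcm : c ≤ m)
    (ha : ∀ t, 0 ≤ a t) (hu : ∀ t, 0 ≤ u t) (h : ∀ t, u (t + 1) ≤ (1 + c * a t) ^ 2 * u t)
    (t : ℕ) : u t ≤ u 0 * exp (2 * m * ∑ i ∈ range t, a i) := by
  induction t with
  | zero => simp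
  | succ t ih =>
    have hstep : (1 + c * a t) ^ 2 ≤ exp (2 * m * a t) :=
      (sq_one_add_le_exp_two_mul (by nlinarith [ha t])).trans
        (exp_le_exp.2 (by nlinarith [ha t]))
    calc u (t + 1) ≤ (1 + c * a t) ^ 2 * u t := h t
      _ ≤ exp (2 * m * a t) * (u 0 * exp (2 * m * ∑ i ∈ range t, a i)) :=
        mul_le_mul hstep ih (hu t) (exp_pos _).le
      _ = u 0 * exp (2 * m * ∑ i ∈ range (t + 1), a i) := by
        rw [sum_range_succ, mul_add, exp_add]; ring

lemma sum_le_div_of_le_geometric {a : ℕ → ℝ} {r : ℝ} (hr0 : 0 ≤ r) (hr1 : r < 1)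
    (ha0 : 0 ≤ a 0) (t : ℕ) (ha : ∀ i < t, a i ≤ r ^ i * a 0) :
    ∑ i ∈ range t, a i ≤ a 0 / (1 - r) :=
  calc ∑ i ∈ range t, a i ≤ (∑ i ∈ range t, r ^ i) * a 0 := by
        rw [sum_mul]; exact sum_le_sum fun i hi => ha i (mem_range.1 hi)
    _ ≤ 1 / (1 - r) * a 0 := by
        gcongr
        have := geom_sum_Ico_le_of_lt_one (m := 0) (n := t) hr0 hr1
        rwa [← range_eq_Ico, pow_zero] at this
    _ = a 0 / (1 - r) := by ring

lemma exp_two_mul_sum_le_three_halves {a : ℕ → ℝ} {m e : ℝ} (hm : 0 ≤ m) (he : 1 ≤ e)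
    (ha0 : 0 ≤ a 0) (h₀ : m * a 0 ≤ log (3 / 2) / (4 * e)) (t : ℕ)
    (ha : ∀ i < t, a i ≤ (1 - 1 / (2 * e)) ^ i * a 0) :
    exp (2 * m * ∑ i ∈ range t, a i) ≤ 3 / 2 := by
  have he0 : 0 < e := by linarith
  have hr0 : 0 ≤ 1 - 1 / (2 * e) := by
    rw [sub_nonneg, div_le_one (by positivity)]; linarith
  have hsum : ∑ i ∈ range t, a i ≤ 2 * e * a 0 := by
    have := sum_le_div_of_le_geometric hr0 (by simp [he0]) ha0 t ha
    rwa [sub_sub_cancel, div_div_eq_mul_div, div_one, mul_comm] at this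
  rw [← le_log_iff_exp_le (by norm_num)]
  calc 2 * m * ∑ i ∈ range t, a i ≤ 2 * m * (2 * e * a 0) := by gcongr
    _ = 4 * e * (m * a 0) := by ring
    _ ≤ 4 * e * (log (3 / 2) / (4 * e)) := by gcongr
    _ = log (3 / 2) := by field_simp

lemma le_geometric_of_recursions {lam eta : ℕ → ℝ} {m₁ m : ℝ} (hm₁ : 0 < m₁) (hm₁m : m₁ ≤ m)
    (hlam : ∀ t, 0 < lam t) (heta : ∀ t, 1 ≤ eta t)
    (h₁ : ∀ t, m₁ * lam t ≤ 2 →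
      lam (t + 1) ≤ (1 - 1 / eta t) * lam t + m₁ * lam t ^ 2 / 2 +
        m₁ ^ 2 * lam t ^ 3 / (4 * eta t))
    (hη : ∀ t, eta t ≤ eta 0 * exp (2 * m * ∑ i ∈ range t, lam i))
    (h₀ : m * lam 0 ≤ log (3 / 2) / (4 * eta 0)) (t : ℕ) :
    lam t ≤ (1 - 1 / (2 * eta 0)) ^ t * lam 0 := by
  set r := 1 - 1 / (2 * eta 0)
  have he0 : 1 ≤ eta 0 := heta 0
  have hr0 : 0 ≤ r := by
    rw [sub_nonneg, div_le_one (by positivity)]; linarith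
  have hr1 : r ≤ 1 := by simp only [r]; linarith [show 0 < 1 / (2 * eta 0) by positivity]
  have hsmall : m * lam 0 ≤ 1 / (8 * eta 0) :=
    calc m * lam 0 ≤ log (3 / 2) / (4 * eta 0) := h₀
      _ ≤ (1 / 2) / (4 * eta 0) := by
        gcongr; linarith [log_le_sub_one_of_pos (show (0 : ℝ) < 3 / 2 by norm_num)]
      _ = 1 / (8 * eta 0) := by ring
  induction t using Nat.strong_induction_on with
  | _ t ih =>
  cases t with
  | zero => simp
  | succ t =>
    have hlt : lam t ≤ r ^ t * lam 0 := ih t t.lt_succ_self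
    have heta_t : eta t ≤ 3 / 2 * eta 0 :=
      calc eta t ≤ eta 0 * exp (2 * m * ∑ i ∈ range t, lam i) := hη t
        _ ≤ eta 0 * (3 / 2) := by
          gcongr
          exact exp_two_mul_sum_le_three_halves (hm₁.le.trans hm₁m) he0 (hlam 0).le h₀ t
            fun i hi => ih i (by omega)
        _ = 3 / 2 * eta 0 := by ring
    have hx : m₁ * lam t ≤ 1 / (8 * eta 0) :=
      calc m₁ * lam t ≤ m * lam 0 :=
            mul_le_mul hm₁m (hlt.trans (mul_le_of_le_one_left (hlam 0).le (pow_le_one₀ hr0 hr1)))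
              (hlam t).le (hm₁.le.trans hm₁m)
        _ ≤ 1 / (8 * eta 0) := hsmall
    have hx2 : m₁ * lam t ≤ 2 := by
      have : 1 / (8 * eta 0) ≤ 1 := (div_le_one (by positivity)).2 (by linarith)
      linarith
    calc lam (t + 1)
        ≤ (1 - 1 / eta t) * lam t + m₁ * lam t ^ 2 / 2 + m₁ ^ 2 * lam t ^ 3 / (4 * eta t) :=
          h₁ t hx2
      _ ≤ r * lam t :=
          contraction_step_le (hlam t).le hm₁.le hx he0 (by linarith [heta t]) heta_t
      _ ≤ r * (r ^ t * lam 0) := by gcongr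
      _ = r ^ (t + 1) * lam 0 := by ring

/-- **Lemma B.2**: given positive sequences `λ_t` and `η̃_t ≥ 1` satisfying the
quasi-Newton recursions, a small enough `λ₀` yields
`η̃_t ≤ η̃₀ exp(2m ∑_{i<t} λ_i) ≤ (3/2)η̃₀` and `λ_t ≤ (1 − 1/(2η̃₀))^t λ₀`. -/
theorem sequence_linear_convergence (lam eta : ℕ → ℝ) (m₁ m₂ : ℝ)
    (hm₁ : 0 < m₁) (hm₂ : 0 < m₂)
    (hlam : ∀ t, 0 < lam t) (heta : ∀ t, 1 ≤ eta t)
    (h₁ : ∀ t, m₁ * lam t ≤ 2 →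
      lam (t + 1) ≤ (1 - 1 / eta t) * lam t + m₁ * lam t ^ 2 / 2 +
        m₁ ^ 2 * lam t ^ 3 / (4 * eta t))
    (h₂ : ∀ t, eta (t + 1) ≤ (1 + m₂ * lam t) ^ 2 * eta t)
    (h₀ : max m₁ m₂ * lam 0 ≤ Real.log (3 / 2) / (4 * eta 0)) :
    ∀ t : ℕ,
      (eta t ≤ eta 0 * Real.exp (2 * max m₁ m₂ * ∑ i ∈ Finset.range t, lam i) ∧
        eta 0 * Real.exp (2 * max m₁ m₂ * ∑ i ∈ Finset.range t, lam i) ≤ 3 / 2 * eta 0) ∧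
      lam t ≤ (1 - 1 / (2 * eta 0)) ^ t * lam 0 := by
  have hη := le_mul_exp_two_mul_sum hm₂.le (le_max_right m₁ m₂) (fun t => (hlam t).le)
    (fun t => zero_le_one.trans (heta t)) h₂
  have hgeom := le_geometric_of_recursions hm₁ (le_max_left m₁ m₂) hlam heta h₁ hη h₀
  intro t
  have hexp := exp_two_mul_sum_le_three_halves (hm₁.le.trans (le_max_left m₁ m₂)) (heta 0)
    (hlam 0).le h₀ t fun i _ => hgeom i
  refine ⟨⟨hη t, ?_⟩, hgeom t⟩
  calc eta 0 * exp (2 * max m₁ m₂ * ∑ i ∈ range t, lam i) ≤ eta 0 * (3 / 2) := by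
        gcongr; linarith [heta 0]
    _ = 3 / 2 * eta 0 := by ring
end

section
/- Suppose f : ℝ^d → ℝ is twice differentiable, μ-strongly convex, and its Hessian is L₂-Lipschitz continuous, i.e., ‖∇²f(x) − ∇²f(y)‖ ≤ L₂‖x − y‖ for all x, y (operator norm). Then f is M-strongly self-concordant with M = L₂/μ^{3/2}, i.e., ∇²f(y) − ∇²f(x) ⪯ M‖y − x‖_{∇²f(z)}·∇²f(w) for all x, y, w, z ∈ ℝ^d, where ‖v‖_A = (vᵀAv)^{1/2}. -/
/-!
The Lipschitz bound on the Hessian gives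
`uᵀ(∇²f(y) − ∇²f(x))u ≤ L₂ ‖y − x‖ ‖u‖²`, and strong convexity converts both Euclidean
norms into Hessian norms: `√μ ‖y − x‖ ≤ ‖y − x‖_{∇²f(z)}` and `μ ‖u‖² ≤ uᵀ∇²f(w)u`.
-/

open EuclideanSpace

section

variable {E : Type*} [NormedAddCommGroup E] [NormedSpace ℝ E]

theorem ContinuousMultilinearMap.apply_pair_le_opNorm_mul_sq (B : E [×2]→L[ℝ] ℝ) (u : E) :
    B ![u, u] ≤ ‖B‖ * ‖u‖ ^ 2 := by
  calc B ![u, u] ≤ ‖B ![u, u]‖ := le_abs_self _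
    _ ≤ ‖B‖ * ∏ i, ‖(![u, u] : Fin 2 → E) i‖ := B.le_opNorm _
    _ = ‖B‖ * ‖u‖ ^ 2 := by simp [Fin.prod_univ_two, sq]

theorem sub_apply_pair_le_of_lipschitz {H : E → E [×2]→L[ℝ] ℝ} {L : ℝ}
    (hlip : ∀ x y, ‖H x - H y‖ ≤ L * ‖x - y‖) (x y u : E) :
    H y ![u, u] - H x ![u, u] ≤ L * ‖y - x‖ * ‖u‖ ^ 2 :=
  calc H y ![u, u] - H x ![u, u] = (H y - H x) ![u, u] := rfl
    _ ≤ ‖H y - H x‖ * ‖u‖ ^ 2 := (H y - H x).apply_pair_le_opNorm_mul_sq u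
    _ ≤ L * ‖y - x‖ * ‖u‖ ^ 2 := by gcongr; exact hlip y x

theorem sqrt_mul_norm_le_sqrt_apply_pair {B : E [×2]→L[ℝ] ℝ} {μ : ℝ} {v : E} (hμ : 0 ≤ μ)
    (hB : μ * ‖v‖ ^ 2 ≤ B ![v, v]) : √μ * ‖v‖ ≤ √(B ![v, v]) := by
  simpa [Real.sqrt_mul hμ, Real.sqrt_sq (norm_nonneg v)] using Real.sqrt_le_sqrt hB

end

theorem Real.rpow_three_halves {μ : ℝ} (hμ : 0 < μ) : μ ^ ((3 : ℝ) / 2) = μ * √μ := by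
  rw [show (3 : ℝ) / 2 = 1 + 1 / 2 by norm_num, Real.rpow_add hμ, Real.rpow_one,
    ← Real.sqrt_eq_rpow]

theorem strongly_self_concordant_of_lipschitz_hessian_general {d : ℕ}
    (f : EuclideanSpace ℝ (Fin d) → ℝ)
    (μ L₂ : ℝ) (hμ : 0 < μ) (hL₂ : 0 ≤ L₂)
    (hconv : ∀ x u, μ * ‖u‖ ^ 2 ≤ iteratedFDeriv ℝ 2 f x ![u, u])
    (hlip : ∀ x y, ‖iteratedFDeriv ℝ 2 f x - iteratedFDeriv ℝ 2 f y‖ ≤ L₂ * ‖x - y‖) :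
    ∀ x y w z u : EuclideanSpace ℝ (Fin d),
      iteratedFDeriv ℝ 2 f y ![u, u] - iteratedFDeriv ℝ 2 f x ![u, u] ≤
        L₂ / μ ^ ((3 : ℝ) / 2) * Real.sqrt (iteratedFDeriv ℝ 2 f z ![y - x, y - x]) *
          iteratedFDeriv ℝ 2 f w ![u, u] := by
  intro x y w z u
  rw [Real.rpow_three_halves hμ]
  calc _ ≤ L₂ * ‖y - x‖ * ‖u‖ ^ 2 := sub_apply_pair_le_of_lipschitz hlip x y u
    _ = L₂ / (μ * √μ) * (√μ * ‖y - x‖) * (μ * ‖u‖ ^ 2) := by field_simp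
    _ ≤ _ := by
      gcongr
      · exact sqrt_mul_norm_le_sqrt_apply_pair hμ.le (hconv z (y - x))
      · exact hconv w u

/-- **Proposition 2.5**: a twice continuously differentiable, `μ`-strongly convex
function with `L₂`-Lipschitz Hessian is strongly self-concordant with constant
`M = L₂/μ^{3/2}`, i.e.
`∇²f(y) − ∇²f(x) ⪯ (L₂/μ^{3/2}) ‖y − x‖_{∇²f(z)} ∇²f(w)` for all `x, y, w, z`,
expressed here via the Hessian bilinear form `iteratedFDeriv ℝ 2 f`. -/
theorem strongly_self_concordant_of_lipschitz_hessian {d : ℕ}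
    (f : EuclideanSpace ℝ (Fin d) → ℝ) (hf : ContDiff ℝ 2 f)
    (μ L₂ : ℝ) (hμ : 0 < μ) (hL₂ : 0 ≤ L₂)
    (hconv : ∀ x u, μ * ‖u‖ ^ 2 ≤ iteratedFDeriv ℝ 2 f x ![u, u])
    (hlip : ∀ x y, ‖iteratedFDeriv ℝ 2 f x - iteratedFDeriv ℝ 2 f y‖ ≤ L₂ * ‖x - y‖) :
    ∀ x y w z u : EuclideanSpace ℝ (Fin d),
      iteratedFDeriv ℝ 2 f y ![u, u] - iteratedFDeriv ℝ 2 f x ![u, u] ≤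
        L₂ / μ ^ ((3 : ℝ) / 2) * Real.sqrt (iteratedFDeriv ℝ 2 f z ![y - x, y - x]) *
          iteratedFDeriv ℝ 2 f w ![u, u] :=
  strongly_self_concordant_of_lipschitz_hessian_general f μ L₂ hμ hL₂ hconv hlip
end
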